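/- There is a universal constant C > 0 with the following property. Let d be an even positive integer, let δ ≤ d/4, let a and L be positive integers with d = aL and 1 ≤ a < δ, let m_1,…,m_{2δ−1} be the two-shot masks, and let 0 < p ≤ q. Suppose B : ℝ^{(2δ−1)×L} → ℂ^d satisfies D₂(B(y), B(y′)) ≤ C_B‖y − y′‖₂ for all y, y′ and B(Z(x)) ∼ x for every x ∈ C_{p,q}. Then C_B ≥ C·q·√(d·a) / (p·δ). -/

import Mathlib

open scoped BigOperators

noncomputable section

/-- Map an integer to `Fin d` by reduction mod `d` (requires `0 < d`). -/
def intToFin (d : ℕ) (hd : 0 < d) (z : ℤ) : Fin d :=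
  ⟨(z % (d : ℤ)).toNat, by
    have h1 : 0 ≤ z % (d : ℤ) := Int.emod_nonneg z (by exact_mod_cast hd.ne')
    have h2 : z % (d : ℤ) < (d : ℤ) := Int.emod_lt_of_pos z (by exact_mod_cast hd)
    omega⟩

/-- Circular shift: `(S_ℓ x)(n) = x(((n + ℓ - 1) mod d) + 1)` in 1-based indexing. -/
def shift {d : ℕ} (ℓ : ℤ) (x : Fin d → ℂ) : Fin d → ℂ :=
  fun i => x (intToFin d i.pos ((i : ℤ) + ℓ))

/-- `⟨u,v⟩ = ∑ u(n) conj(v(n))`. -/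
def innerC {d : ℕ} (u v : Fin d → ℂ) : ℂ := ∑ n, u n * (starRingEnd ℂ) (v n)

/-- `x ∼ x'` iff `x = e^{iθ} x'` for some real `θ`. -/
def phaseEquiv {d : ℕ} (x x' : Fin d → ℂ) : Prop :=
  ∃ θ : ℝ, x = fun n => Complex.exp (θ * Complex.I) * x' n

/-- Euclidean norm on `ℂ^d`. -/
def norm2 {d : ℕ} (x : Fin d → ℂ) : ℝ := Real.sqrt (∑ n, ‖x n‖ ^ 2)

/-- `D₂(x,x') = min_θ ‖x - e^{iθ} x'‖₂`. -/
def D2 {d : ℕ} (x x' : Fin d → ℂ) : ℝ :=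
  ⨅ θ : ℝ, norm2 (fun n => x n - Complex.exp (θ * Complex.I) * x' n)

/-- `C_{p,q} = {x : p ≤ |x(n)| ≤ q for all n}`. -/
def Cpq (d : ℕ) (p q : ℝ) : Set (Fin d → ℂ) :=
  {x | ∀ n, p ≤ ‖x n‖ ∧ ‖x n‖ ≤ q}

/-- `‖m‖_∞ = max_k ‖m_k‖_∞`. -/
def maskSup {d K : ℕ} (m : Fin K → Fin d → ℂ) : ℝ :=
  ⨆ k, ⨆ n, ‖m k n‖

/-- The measurement map `Z(x)_{k,ℓ} = |⟨S_{ℓa} m_k, x⟩|`, `1 ≤ k ≤ K`, `1 ≤ ℓ ≤ L`. -/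
def Zmap {d K : ℕ} (L : ℕ) (m : Fin K → Fin d → ℂ) (a : ℕ) (x : Fin d → ℂ) :
    EuclideanSpace ℝ (Fin K × Fin L) :=
  WithLp.toLp 2 fun kl => ‖innerC (shift ((((kl.2 : ℕ) + 1) * a : ℕ) : ℤ) (m kl.1)) x‖

/-- The measurement map `Y(x)_{k,ℓ} = |⟨S_{ℓa} m_k, x⟩|²`. -/
def Ymap {d K : ℕ} (L : ℕ) (m : Fin K → Fin d → ℂ) (a : ℕ) (x : Fin d → ℂ) :
    EuclideanSpace ℝ (Fin K × Fin L) :=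
  WithLp.toLp 2 fun kl => ‖innerC (shift ((((kl.2 : ℕ) + 1) * a : ℕ) : ℤ) (m kl.1)) x‖ ^ 2

/-- The vectors `x^{±}` (sign `ε = ±1`): `q` on positions `1,…,d/2-δ`, `p` on
`d/2-δ+1,…,d/2`, `±q` on `d/2+1,…,d-δ`, and `p` on `d-δ+1,…,d`. -/
def xpm (d δ : ℕ) (p q ε : ℝ) : Fin d → ℂ :=
  fun i => if (i : ℕ) < d / 2 - δ then (q : ℂ)
    else if (i : ℕ) < d / 2 then (p : ℂ)
    else if (i : ℕ) < d - δ then ((ε * q : ℝ) : ℂ)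
    else (p : ℂ)

/-- The difference of outer products `x x^* - x' x'^*`. -/
def outerDiff {d : ℕ} (x x' : Fin d → ℂ) : Matrix (Fin d) (Fin d) ℂ :=
  Matrix.of fun i j => x i * star (x j) - x' i * star (x' j)

lemma outerDiff_isHermitian {d : ℕ} (x x' : Fin d → ℂ) :
    (outerDiff x x').IsHermitian := by
  unfold Matrix.IsHermitian
  ext i j
  simp [outerDiff, Matrix.conjTranspose_apply, star_sub, star_mul, star_star, mul_comm]

/-- `d₁(x,x') = ‖x x^* - x' x'^*‖₁`, the sum of the singular values (for a Hermitian
matrix, the sum of the absolute values of its eigenvalues). -/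
def d1 {d : ℕ} (x x' : Fin d → ℂ) : ℝ :=
  ∑ i, |(outerDiff_isHermitian x x').eigenvalues i|

/-- The two-shot masks: `m_1 = e_1`, `m_{2j} = e_1 + e_{j+1}`, `m_{2j+1} = e_1 + i e_{j+1}`
for `1 ≤ j ≤ δ - 1` (the index `k : Fin (2δ-1)` stands for the mask `m_{k+1}`). -/
def twoShotMask (d δ : ℕ) : Fin (2 * δ - 1) → Fin d → ℂ :=
  fun k n =>
    if (k : ℕ) = 0 then (if (n : ℕ) = 0 then 1 else 0)
    else if (k : ℕ) % 2 = 1 then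
      (if (n : ℕ) = 0 then 1 else if (n : ℕ) = ((k : ℕ) + 1) / 2 then 1 else 0)
    else (if (n : ℕ) = 0 then 1 else if (n : ℕ) = (k : ℕ) / 2 then Complex.I else 0)

/-! The vectors `x⁺ = xpm d δ p q 1` and `x⁻ = xpm d δ p q (-1)` lie in `C_{p,q}` and differ by a
sign flip on a block of `d/2 - δ` entries of modulus `q`, so they are far apart modulo a global
phase: `D₂(x⁺, x⁻) ≥ q √d` by the parallelogram law. A measurement `Z_{k,ℓ}` only sees two entries
at distance less than `δ`, and it can tell `x⁺` from `x⁻` only when these straddle a sign change;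
but the sign changes of `x⁻` are flanked by entries of modulus `p`, so there the measurement moves
by at most `2p`. Only about `4δ/a` of the `L` shifts straddle a sign change, whence
`‖Z(x⁺) - Z(x⁻)‖² ≤ 32 δ² p² / a`, and the Lipschitz bound forces `C_B ≥ q √(da) / (√32 p δ)`. -/

open Finset
open scoped ComplexConjugate

lemma abs_norm_add_sub_norm_sub_le {E : Type*} [SeminormedAddCommGroup E] (a b : E) :
    |‖a + b‖ - ‖a - b‖| ≤ 2 * min ‖a‖ ‖b‖ := by
  have h₁ : |‖a + b‖ - ‖a - b‖| ≤ 2 * ‖a‖ := by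
    calc |‖a + b‖ - ‖a - b‖| = |‖a + b‖ - ‖-(a - b)‖| := by rw [norm_neg]
      _ ≤ ‖a + b - -(a - b)‖ := abs_norm_sub_norm_le _ _
      _ ≤ 2 * ‖a‖ := by rw [sub_neg_eq_add, add_add_sub_cancel]; linarith [norm_add_le a a]
  have h₂ : |‖a + b‖ - ‖a - b‖| ≤ 2 * ‖b‖ := by
    calc |‖a + b‖ - ‖a - b‖| ≤ ‖a + b - (a - b)‖ := abs_norm_sub_norm_le _ _
      _ ≤ 2 * ‖b‖ := by rw [add_sub_sub_cancel]; linarith [norm_add_le b b]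
  rw [mul_min_of_nonneg _ _ zero_le_two]
  exact le_min h₁ h₂

section SignFlips

variable (P Q : Prop) [Decidable P] [Decidable Q] (a b μ : ℂ)

lemma norm_ite_neg_add_mul_ite_neg (h : P ↔ Q) :
    ‖(if P then -a else a) + μ * (if Q then -b else b)‖ = ‖a + μ * b‖ := by
  by_cases hP : P
  · rw [if_pos hP, if_pos (h.mp hP), ← norm_neg]; ring_nf
  · rw [if_neg hP, if_neg (mt h.mpr hP)]

lemma abs_norm_add_mul_sub_norm_ite_neg_le (hμ : ‖μ‖ ≤ 1) :
    |‖a + μ * b‖ - ‖(if P then -a else a) + μ * (if Q then -b else b)‖| ≤ 2 * min ‖a‖ ‖b‖ := by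
  have hμb : min ‖a‖ ‖μ * b‖ ≤ min ‖a‖ ‖b‖ := by
    gcongr
    rw [norm_mul]
    exact mul_le_of_le_one_left (norm_nonneg b) hμ
  refine le_trans ?_ (mul_le_mul_of_nonneg_left hμb zero_le_two)
  by_cases hPQ : P ↔ Q
  · rw [norm_ite_neg_add_mul_ite_neg P Q a b μ hPQ, sub_self, abs_zero]
    positivity
  by_cases hP : P
  · rw [if_pos hP, if_neg (fun hQ => hPQ (iff_of_true hP hQ)), ← norm_neg (-a + _),
      neg_add, neg_neg, ← sub_eq_add_neg]
    exact abs_norm_add_sub_norm_sub_le a (μ * b)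
  · rw [if_neg hP, if_pos (by tauto), mul_neg, ← sub_eq_add_neg]
    exact abs_norm_add_sub_norm_sub_le a (μ * b)

end SignFlips

lemma sum_sq_le_card_mul_sq {ι : Type*} [Fintype ι] [DecidableEq ι] (s : Finset ι) {f : ι → ℝ}
    {b : ℝ} (hf : ∀ i, |f i| ≤ if i ∈ s then b else 0) : ∑ i, f i ^ 2 ≤ #s * b ^ 2 := by
  have hs : ∀ i ∉ s, f i = 0 := fun i hi => abs_nonpos_iff.mp ((hf i).trans_eq (if_neg hi))
  rw [← sum_subset (subset_univ s) fun i _ hi => by rw [hs i hi, sq, zero_mul], ← nsmul_eq_mul]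
  refine sum_le_card_nsmul _ _ _ fun i hi => sq_le_sq' ?_ ?_
  all_goals have := (hf i).trans_eq (if_pos hi); linarith [abs_le.mp this]

lemma Fin.card_filter_val_mem_Ico {n m₁ m₂ : ℕ} (h : m₂ ≤ n) :
    #{i : Fin n | (i : ℕ) ∈ Finset.Ico m₁ m₂} = m₂ - m₁ := by
  rw [← card_map Fin.valEmbedding, map_filter', Fin.map_valEmbedding_univ, ← Nat.card_Ico]
  congr 1
  ext b
  simp only [mem_filter, mem_Iio, mem_Ico, Fin.valEmbedding_apply]
  exact ⟨fun ⟨_, i, hi, hib⟩ => hib ▸ hi, fun hb => ⟨by omega, ⟨b, by omega⟩, hb, rfl⟩⟩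

lemma card_filter_mul_mem_Ioo_le {ι : Type*} [Fintype ι] {f : ι → ℕ} (hf : Function.Injective f)
    {a : ℕ} (ha : 0 < a) {A B w : ℕ} (hB : B ≤ A + w) :
    #{i | f i * a ∈ Finset.Ioo A B} ≤ w / a + 1 := by
  calc #{i | f i * a ∈ Finset.Ioo A B} ≤ #(Finset.Ioo (A / a) (A / a + w / a + 2)) := by
        refine card_le_card_of_injOn f (fun i hi => ?_) hf.injOn
        simp only [coe_filter, mem_univ, true_and, mem_Ioo, Set.mem_ofPred_eq] at hi
        have hA := Nat.lt_div_mul_add (a := A) ha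
        have hw := Nat.lt_div_mul_add (a := w) ha
        simp only [coe_Ioo, Set.mem_Ioo]
        exact ⟨(Nat.div_lt_iff_lt_mul ha).mpr hi.1,
          Nat.lt_of_mul_lt_mul_right (a := a) (by nlinarith)⟩
    _ = w / a + 1 := by rw [Nat.card_Ioo]; generalize A / a = x; generalize w / a = y; omega

lemma div_le_of_le_mul_of_mul_le {x y s N c : ℝ} (hx : 0 < x) (hN : 0 ≤ N) (hs : 0 ≤ s)
    (hxN : x ≤ c * N) (hNs : N * s ≤ y) (hy : 0 < y) : x * s / y ≤ c := by
  have hc : 0 < c := pos_of_mul_pos_left (hx.trans_le hxN) hN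
  rw [div_le_iff₀ hy]
  calc x * s ≤ c * N * s := by gcongr
    _ = c * (N * s) := mul_assoc _ _ _
    _ ≤ c * y := by gcongr

lemma coe_intToFin (d : ℕ) (hd : 0 < d) (z : ℤ) : ((intToFin d hd z : ℕ) : ℤ) = z % d :=
  Int.toNat_of_nonneg (Int.emod_nonneg z (by exact_mod_cast hd.ne'))

lemma intToFin_congr {d : ℕ} (hd : 0 < d) {z z' : ℤ} (h : z ≡ z' [ZMOD d]) :
    intToFin d hd z = intToFin d hd z' :=
  Fin.ext (by exact_mod_cast
    (coe_intToFin d hd z).trans ((show z % d = z' % d from h).trans (coe_intToFin d hd z').symm))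

lemma val_intToFin_natCast (d : ℕ) (hd : 0 < d) (n : ℕ) : (intToFin d hd n : ℕ) = n % d := by
  exact_mod_cast coe_intToFin d hd n

lemma intToFin_val_eq_self (d : ℕ) (hd : 0 < d) (i : Fin d) : intToFin d hd i = i :=
  Fin.ext (by rw [val_intToFin_natCast, Nat.mod_eq_of_lt i.isLt])

lemma intToFin_intToFin_add (d : ℕ) (hd : 0 < d) (z s : ℤ) :
    intToFin d hd ((intToFin d hd z : ℤ) + s) = intToFin d hd (z + s) :=
  intToFin_congr hd (by rw [coe_intToFin]; exact (Int.mod_modEq z d).add_right s)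

lemma innerC_shift_eq_sum (d : ℕ) (hd : 0 < d) (t : ℤ) (m x : Fin d → ℂ) :
    innerC (shift t m) x = ∑ j, m j * conj (x (intToFin d hd (j - t))) := by
  have cancel : ∀ (i : Fin d) (s : ℤ), intToFin d hd ((intToFin d hd (i + s) : ℤ) - s) = i :=
    fun i s => by
      rw [sub_eq_add_neg, intToFin_intToFin_add, add_neg_cancel_right, intToFin_val_eq_self]
  let e : Fin d ≃ Fin d :=
    { toFun := fun i => intToFin d hd (i + t)
      invFun := fun j => intToFin d hd (j - t)
      left_inv := fun i => cancel i t
      right_inv := fun j => by simpa only [sub_neg_eq_add, ← sub_eq_add_neg] using cancel j (-t) }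
  exact Fintype.sum_equiv e _ _ fun i => by simp only [e, Equiv.coe_fn_mk, cancel]; rfl

-- Coefficient of the second spike of the mask `m_{k+1}`; the mask `m_1 = e_1` has none.
def twoShotCoef (k : ℕ) : ℂ := if k = 0 then 0 else if k % 2 = 1 then 1 else Complex.I

lemma norm_twoShotCoef_le_one (k : ℕ) : ‖twoShotCoef k‖ ≤ 1 := by
  unfold twoShotCoef; split_ifs <;> simp

lemma twoShotMask_apply (d δ : ℕ) (k : Fin (2 * δ - 1)) (n : Fin d) :
    twoShotMask d δ k n = (if (n : ℕ) = 0 then 1 else 0)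
      + (if (n : ℕ) = ((k : ℕ) + 1) / 2 then twoShotCoef k else 0) := by
  unfold twoShotMask twoShotCoef
  split_ifs <;> first | omega | simp

lemma sum_ite_val_eq_mul {d : ℕ} (c : ℕ) (hc : c < d) (μ : ℂ) (g : Fin d → ℂ) :
    ∑ j : Fin d, (if (j : ℕ) = c then μ else 0) * g j = μ * g ⟨c, hc⟩ := by
  rw [Fintype.sum_eq_single ⟨c, hc⟩ fun j hj => by simp [Fin.ext_iff] at hj; simp [hj]]
  simp

lemma innerC_shift_twoShotMask {d δ : ℕ} (hd : 0 < d) (hδ : δ ≤ d) (t : ℤ) (x : Fin d → ℂ)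
    (k : Fin (2 * δ - 1)) :
    innerC (shift t (twoShotMask d δ k)) x = conj (x (intToFin d hd (-t)))
      + twoShotCoef k * conj (x (intToFin d hd ((((k : ℕ) + 1) / 2 : ℕ) - t))) := by
  have hk : ((k : ℕ) + 1) / 2 < d := by omega
  simp only [innerC_shift_eq_sum d hd, twoShotMask_apply, add_mul, sum_add_distrib]
  rw [sum_ite_val_eq_mul 0 hd, sum_ite_val_eq_mul _ hk]
  simp

section TestVectors

-- `x⁻ = -x⁺` exactly on `flipBlock`, `‖x^±‖ = p` exactly on `smallBlock`, and two indices `n` and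
-- `n + c mod d` with `c < δ` can carry different signs only if `n ∈ straddleZone`.
def flipBlock (d δ : ℕ) : Finset ℕ := Finset.Ico (d / 2) (d - δ)

def smallBlock (d δ : ℕ) : Finset ℕ := Finset.Ico (d / 2 - δ) (d / 2) ∪ Finset.Ico (d - δ) d

def straddleZone (d δ : ℕ) : Finset ℕ :=
  Finset.Ioo (d / 2 - δ) (d / 2) ∪ Finset.Ioo (d - 2 * δ) (d - δ)

variable (d δ : ℕ) (p q : ℝ)

lemma xpm_mem_Cpq {ε : ℝ} (hp : 0 ≤ p) (hpq : p ≤ q) (hε : |ε| = 1) :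
    xpm d δ p q ε ∈ Cpq d p q := by
  have hq : 0 ≤ q := hp.trans hpq
  intro n
  unfold xpm
  split_ifs <;> simp [Complex.norm_real, hε, abs_of_nonneg hp, abs_of_nonneg hq, hpq]

lemma xpm_neg_one_apply (n : Fin d) :
    xpm d δ p q (-1) n
      = if (n : ℕ) ∈ flipBlock d δ then -xpm d δ p q 1 n else xpm d δ p q 1 n := by
  simp only [xpm, flipBlock, Finset.mem_Ico]
  split_ifs <;> first | omega | simp

lemma norm_xpm_one_of_mem {n : Fin d} (hp : 0 ≤ p)
    (hn : (n : ℕ) ∈ smallBlock d δ) :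
    ‖xpm d δ p q 1 n‖ = p := by
  simp only [smallBlock, Finset.mem_union, Finset.mem_Ico] at hn
  unfold xpm
  split_ifs <;> first | omega | simp [abs_of_nonneg hp]

end TestVectors

lemma mem_straddleZone_and_smallBlock_of_not_iff {d δ n c : ℕ} (h4 : 4 * δ ≤ d) (hn : n < d)
    (hc : c < δ) (hflip : ¬(n ∈ flipBlock d δ ↔ (n + c) % d ∈ flipBlock d δ)) :
    n ∈ straddleZone d δ ∧ (n ∈ smallBlock d δ ∨ (n + c) % d ∈ smallBlock d δ) := by
  have hwrap : (n + c) % d = n + c ∨ d ≤ n + c ∧ (n + c) % d = n + c - d := by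
    rcases lt_or_ge (n + c) d with h | h
    · exact .inl (Nat.mod_eq_of_lt h)
    · exact .inr ⟨h, by rw [Nat.mod_eq_sub_mod h, Nat.mod_eq_of_lt (by omega)]⟩
  simp only [flipBlock, smallBlock, straddleZone, Finset.mem_union, Finset.mem_Ico,
    Finset.mem_Ioo] at hflip ⊢
  omega

lemma card_filter_mul_mem_straddleZone_le {ι : Type*} [Fintype ι] {f : ι → ℕ}
    (hf : Function.Injective f) {d δ a : ℕ} (ha : 0 < a) (haδ : a ≤ δ) :
    (#{i | f i * a ∈ straddleZone d δ} : ℝ) ≤ 4 * δ / a := by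
  have hcount : #{i | f i * a ∈ straddleZone d δ} ≤ 4 * (δ / a) := by
    classical
    calc #{i | f i * a ∈ straddleZone d δ}
        ≤ #{i | f i * a ∈ Finset.Ioo (d / 2 - δ) (d / 2)}
          + #{i | f i * a ∈ Finset.Ioo (d - 2 * δ) (d - δ)} := by
          refine (card_le_card fun i => ?_).trans (card_union_le _ _)
          simp only [straddleZone, mem_filter, mem_univ, true_and, mem_union]
          exact id
      _ ≤ (δ / a + 1) + (δ / a + 1) :=
          add_le_add (card_filter_mul_mem_Ioo_le hf ha (by omega))
            (card_filter_mul_mem_Ioo_le hf ha (by omega))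
      _ ≤ 4 * (δ / a) := by
          have : 1 ≤ δ / a := (Nat.one_le_div_iff ha).mpr haδ
          omega
  calc (#{i | f i * a ∈ straddleZone d δ} : ℝ) ≤ ((4 * (δ / a) : ℕ) : ℝ) := by exact_mod_cast hcount
    _ ≤ 4 * δ / a := by
        rw [Nat.cast_mul, mul_div_assoc]
        exact mul_le_mul_of_nonneg_left Nat.cast_div_le (by norm_num)

-- The index `ℓ : Fin L` is the shift by `(ℓ + 1) a`, which moves the support of a mask to start at
-- `d - (ℓ + 1) a = ℓ.rev * a`.
lemma Zmap_twoShotMask_apply {d δ a L : ℕ} (hd : 0 < d) (hδ : δ ≤ d) (hdaL : d = a * L)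
    (x : Fin d → ℂ) (k : Fin (2 * δ - 1)) (ℓ : Fin L) :
    Zmap L (twoShotMask d δ) a x (k, ℓ)
      = ‖conj (x (intToFin d hd ((ℓ.rev * a : ℕ) : ℤ))) + twoShotCoef k
          * conj (x (intToFin d hd ((ℓ.rev * a + ((k : ℕ) + 1) / 2 : ℕ) : ℤ)))‖ := by
  have hwindow : ∀ c : ℕ, intToFin d hd ((c : ℤ) - (((ℓ : ℕ) + 1) * a : ℕ))
      = intToFin d hd ((ℓ.rev * a + c : ℕ) : ℤ) := fun c => by
    refine intToFin_congr hd (Int.modEq_iff_dvd.mpr ⟨1, ?_⟩)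
    have hℓ : (ℓ : ℕ) + 1 ≤ L := ℓ.isLt
    push_cast [Fin.val_rev, Nat.cast_sub hℓ, hdaL]
    ring
  simp only [Zmap, PiLp.toLp_apply, innerC_shift_twoShotMask hd hδ, hwindow]
  simpa using congrArg (fun i => ‖conj (x i) + _‖) (hwindow 0)

lemma abs_Zmap_xpm_sub_le {d δ a L : ℕ} {p : ℝ} (q : ℝ) (hd : 0 < d) (h4 : 4 * δ ≤ d) (ha : 0 < a)
    (hdaL : d = a * L) (hp : 0 ≤ p) (k : Fin (2 * δ - 1)) (ℓ : Fin L) :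
    |Zmap L (twoShotMask d δ) a (xpm d δ p q 1) (k, ℓ)
        - Zmap L (twoShotMask d δ) a (xpm d δ p q (-1)) (k, ℓ)|
      ≤ if (ℓ.rev : ℕ) * a ∈ straddleZone d δ then 2 * p else 0 := by
  set n := (ℓ.rev : ℕ) * a
  set c := ((k : ℕ) + 1) / 2
  have hn : n < d := hdaL ▸ mul_comm L a ▸ Nat.mul_lt_mul_of_pos_right ℓ.rev.isLt ha
  have hi₀ : (intToFin d hd (n : ℤ) : ℕ) = n := by
    rw [val_intToFin_natCast, Nat.mod_eq_of_lt hn]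
  have hi₁ : (intToFin d hd ((n + c : ℕ) : ℤ) : ℕ) = (n + c) % d := val_intToFin_natCast d hd _
  rw [Zmap_twoShotMask_apply hd (by omega) hdaL, Zmap_twoShotMask_apply hd (by omega) hdaL]
  simp only [xpm_neg_one_apply, apply_ite conj, map_neg]
  by_cases hflip : n ∈ flipBlock d δ ↔ (n + c) % d ∈ flipBlock d δ
  · rw [norm_ite_neg_add_mul_ite_neg _ _ _ _ _ (by rwa [hi₀, hi₁]), sub_self, abs_zero]
    split_ifs <;> positivity
  obtain ⟨hzone, hsmall⟩ := mem_straddleZone_and_smallBlock_of_not_iff h4 hn (by omega) hflip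
  rw [if_pos hzone]
  refine (abs_norm_add_mul_sub_norm_ite_neg_le _ _ _ _ _ (norm_twoShotCoef_le_one k)).trans ?_
  rw [Complex.norm_conj, Complex.norm_conj, mul_le_mul_iff_right₀ two_pos]
  rcases hsmall with h | h
  · exact (min_le_left _ _).trans (norm_xpm_one_of_mem d δ p q hp (hi₀ ▸ h)).le
  · exact (min_le_right _ _).trans (norm_xpm_one_of_mem d δ p q hp (hi₁ ▸ h)).le

lemma norm_Zmap_xpm_sub_sq_le {d δ a L : ℕ} {p : ℝ} (q : ℝ) (hd : 0 < d) (h4 : 4 * δ ≤ d)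
    (ha : 0 < a) (haδ : a ≤ δ) (hdaL : d = a * L) (hp : 0 ≤ p) :
    ‖Zmap L (twoShotMask d δ) a (xpm d δ p q 1) - Zmap L (twoShotMask d δ) a (xpm d δ p q (-1))‖ ^ 2
      ≤ 32 * δ ^ 2 * p ^ 2 / a := by
  let s : Finset (Fin (2 * δ - 1) × Fin L) :=
    univ ×ˢ univ.filter fun ℓ : Fin L => (ℓ.rev : ℕ) * a ∈ straddleZone d δ
  have hs : (#s : ℝ) ≤ 2 * δ * (4 * δ / a) := by
    rw [card_product, card_univ, Fintype.card_fin, Nat.cast_mul]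
    gcongr
    · exact_mod_cast (by omega : 2 * δ - 1 ≤ 2 * δ)
    · exact card_filter_mul_mem_straddleZone_le (Fin.val_injective.comp Fin.rev_injective) ha haδ
  rw [EuclideanSpace.norm_sq_eq]
  simp only [PiLp.sub_apply, Real.norm_eq_abs, sq_abs]
  calc _ ≤ #s * (2 * p) ^ 2 := sum_sq_le_card_mul_sq s fun kl => by
        simpa [s] using abs_Zmap_xpm_sub_le q hd h4 ha hdaL hp kl.1 kl.2
    _ ≤ 2 * δ * (4 * δ / a) * (2 * p) ^ 2 := by gcongr
    _ = 32 * δ ^ 2 * p ^ 2 / a := by ring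

lemma sqrt_le_D2_of_phaseEquiv {d : ℕ} {u v x x' : Fin d → ℂ} {c : ℝ} (hu : phaseEquiv u x)
    (hv : phaseEquiv v x')
    (h : ∀ α β : ℂ, ‖α‖ = 1 → ‖β‖ = 1 → c ≤ ∑ n, ‖α * x n - β * x' n‖ ^ 2) :
    √c ≤ D2 u v := by
  obtain ⟨θ₁, rfl⟩ := hu
  obtain ⟨θ₂, rfl⟩ := hv
  refine le_ciInf fun θ => Real.sqrt_le_sqrt ?_
  simpa only [mul_assoc] using h _ (Complex.exp (θ * Complex.I) * Complex.exp (θ₂ * Complex.I))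
    (Complex.norm_exp_ofReal_mul_I θ₁)
    (by simp only [norm_mul, Complex.norm_exp_ofReal_mul_I, one_mul])

lemma le_sum_norm_sq_sub_xpm {d δ : ℕ} (p q : ℝ) (hd : Even d) (h4 : 4 * δ ≤ d) {α β : ℂ}
    (hα : ‖α‖ = 1) (hβ : ‖β‖ = 1) :
    q ^ 2 * d ≤ ∑ n, ‖α * xpm d δ p q 1 n - β * xpm d δ p q (-1) n‖ ^ 2 := by
  set f := fun n => ‖α * xpm d δ p q 1 n - β * xpm d δ p q (-1) n‖ ^ 2
  let S₁ : Finset (Fin d) := {n | (n : ℕ) ∈ Finset.Ico 0 (d / 2 - δ)}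
  let S₂ : Finset (Fin d) := {n | (n : ℕ) ∈ flipBlock d δ}
  have hf₁ : ∀ n ∈ S₁, f n = ‖α - β‖ ^ 2 * q ^ 2 := fun n hn => by
    simp only [S₁, mem_filter, mem_univ, true_and, mem_Ico] at hn
    simp [f, xpm, hn.2, ← sub_mul, mul_pow]
  have hf₂ : ∀ n ∈ S₂, f n = ‖α + β‖ ^ 2 * q ^ 2 := fun n hn => by
    simp only [S₂, flipBlock, mem_filter, mem_univ, true_and, mem_Ico] at hn
    simp [f, xpm, hn.2, show ¬ (n : ℕ) < d / 2 - δ by omega, show ¬ (n : ℕ) < d / 2 by omega,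
      ← add_mul, mul_pow]
  have hdisj : Disjoint S₁ S₂ := disjoint_filter.mpr fun n _ h₁ h₂ => by
    simp only [flipBlock, mem_Ico] at h₁ h₂; omega
  have hcard₁ : #S₁ = d / 2 - δ := by
    rw [Fin.card_filter_val_mem_Ico (by omega)]; rfl
  have hcard₂ : #S₂ = d / 2 - δ :=
    (Fin.card_filter_val_mem_Ico (m₁ := d / 2) (by omega)).trans (by obtain ⟨r, rfl⟩ := hd; omega)
  have hcast : (d : ℝ) ≤ 4 * (d / 2 - δ : ℕ) := by
    exact_mod_cast (by obtain ⟨r, rfl⟩ := hd; omega : d ≤ 4 * (d / 2 - δ))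
  have hpar : ‖α + β‖ ^ 2 + ‖α - β‖ ^ 2 = 4 := by
    rw [parallelogram_law_with_norm ℂ, hα, hβ]; norm_num
  calc q ^ 2 * d ≤ q ^ 2 * (4 * (d / 2 - δ : ℕ)) := mul_le_mul_of_nonneg_left hcast (sq_nonneg q)
    _ = (d / 2 - δ : ℕ) * (‖α - β‖ ^ 2 * q ^ 2) + (d / 2 - δ : ℕ) * (‖α + β‖ ^ 2 * q ^ 2) := by
        rw [← hpar]; ring
    _ = ∑ n ∈ S₁ ∪ S₂, f n := by
        rw [sum_union hdisj, sum_congr rfl hf₁, sum_congr rfl hf₂, sum_const, sum_const, hcard₁,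
          hcard₂, nsmul_eq_mul, nsmul_eq_mul]
    _ ≤ ∑ n, f n := sum_le_sum_of_subset_of_nonneg (subset_univ _) fun n _ _ => by positivity

/-- Lower Lipschitz bound for recovery from the `Z`-measurements
with the two-shot masks. -/
theorem lower_lipschitz_Z_twoShot : ∃ C : ℝ, 0 < C ∧
    ∀ (d δ a L : ℕ) (p q CB : ℝ)
      (B : EuclideanSpace ℝ (Fin (2 * δ - 1) × Fin L) → (Fin d → ℂ)),
      0 < d → Even d → 4 * δ ≤ d → 0 < a → 0 < L → d = a * L → 1 ≤ a → a < δ →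
      0 < p → p ≤ q →
      (∀ y y', D2 (B y) (B y') ≤ CB * ‖y - y'‖) →
      (∀ x ∈ Cpq d p q, phaseEquiv (B (Zmap L (twoShotMask d δ) a x)) x) →
      C * q * Real.sqrt ((d : ℝ) * a) / (p * (δ : ℝ)) ≤ CB := by
  refine ⟨1 / 6, by norm_num, ?_⟩
  intro d δ a L p q CB B hd hdeven h4δ ha _ hdaL _ haδ hp hpq hLip hRec
  set y₁ := Zmap L (twoShotMask d δ) a (xpm d δ p q 1)
  set y₂ := Zmap L (twoShotMask d δ) a (xpm d δ p q (-1))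
  have hq : 0 < q := hp.trans_le hpq
  have hsep : q * √d ≤ CB * ‖y₁ - y₂‖ :=
    calc q * √d = √(q ^ 2 * d) := by rw [Real.sqrt_mul (sq_nonneg q), Real.sqrt_sq hq.le]
      _ ≤ D2 (B y₁) (B y₂) :=
          sqrt_le_D2_of_phaseEquiv (hRec _ (xpm_mem_Cpq d δ p q hp.le hpq (by simp)))
            (hRec _ (xpm_mem_Cpq d δ p q hp.le hpq (by simp)))
            fun _ _ hα hβ => le_sum_norm_sq_sub_xpm p q hdeven h4δ hα hβ
      _ ≤ CB * ‖y₁ - y₂‖ := hLip _ _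
  have hZ : ‖y₁ - y₂‖ * √a ≤ 6 * δ * p := by
    have ha' : (0 : ℝ) < a := by exact_mod_cast ha
    refine (pow_le_pow_iff_left₀ (by positivity) (by positivity) two_ne_zero).mp ?_
    calc (‖y₁ - y₂‖ * √a) ^ 2 = ‖y₁ - y₂‖ ^ 2 * a := by rw [mul_pow, Real.sq_sqrt ha'.le]
      _ ≤ 32 * δ ^ 2 * p ^ 2 := by
          rw [← le_div_iff₀ ha']; exact norm_Zmap_xpm_sub_sq_le q hd h4δ ha haδ.le hdaL hp.le
      _ ≤ (6 * δ * p) ^ 2 := by nlinarith [sq_nonneg ((δ : ℝ) * p)]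
  have hδ : (0 : ℝ) < δ := by exact_mod_cast (by omega : 0 < δ)
  calc 1 / 6 * q * √(d * a) / (p * δ) = q * √d * √a / (6 * δ * p) := by
        rw [Real.sqrt_mul (Nat.cast_nonneg d)]; field_simp
    _ ≤ CB := div_le_of_le_mul_of_mul_le (by positivity) (norm_nonneg _) (by positivity) hsep hZ
      (by positivity)
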